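/- The natural homomorphism from the free group on the two-element set {θ1, θ2} to G (sending the generators θ1, θ2 to the images of θ1, θ2 in G) is injective, so the images of θ1 and θ2 generate a free subgroup of rank 2 in G. -/
import Mathlib


/-- The four generators θ₁, θ₂, a, k of the free group `F` on four letters. -/
def theta1 : FreeGroup (Fin 4) := FreeGroup.of 0
def theta2 : FreeGroup (Fin 4) := FreeGroup.of 1
def aF : FreeGroup (Fin 4) := FreeGroup.of 2
def kF : FreeGroup (Fin 4) := FreeGroup.of 3

/-- The four defining relators θᵢ⁻¹aθᵢa⁻¹ and θᵢ⁻¹kθᵢa⁻¹k⁻¹, i = 1,2. -/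
def rels : Set (FreeGroup (Fin 4)) :=
  {theta1⁻¹ * aF * theta1 * aF⁻¹, theta2⁻¹ * aF * theta2 * aF⁻¹,
   theta1⁻¹ * kF * theta1 * aF⁻¹ * kF⁻¹, theta2⁻¹ * kF * theta2 * aF⁻¹ * kF⁻¹}

/-- The group `G = ⟨θ₁, θ₂, a, k ∣ aᶿⁱ = a, kᶿⁱ = ka⟩`. -/
abbrev G : Type := PresentedGroup rels

/-- The quotient map `F → G`. -/
def π : FreeGroup (Fin 4) →* G := PresentedGroup.mk rels

/-- The natural homomorphism from the free group on `{θ₁, θ₂}` (with `θ₁ = of 0`,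
`θ₂ = of 1`) to `G`, sending the generators to the images of `θ₁`, `θ₂` in `G`. -/
def iotaTheta : FreeGroup (Fin 2) →* G :=
  FreeGroup.lift (fun i => if i = 0 then π theta1 else π theta2)

def rfun : Fin 4 → FreeGroup (Fin 2) := fun i =>
  if i = 0 then FreeGroup.of 0 else if i = 1 then FreeGroup.of 1 else 1

lemma rels_one : ∀ r ∈ rels, FreeGroup.lift rfun r = 1 := by
  intro r hr
  rcases hr with h | h | h | h <;> subst h <;>
    simp [theta1, theta2, aF, kF, rfun]

def retr : G →* FreeGroup (Fin 2) := PresentedGroup.toGroup rels_one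

/-- The natural map `F(θ₁,θ₂) → G` is injective, i.e. the images of θ₁, θ₂
generate a free subgroup of rank 2 in `G`. -/
theorem theta_free :
    Function.Injective iotaTheta := by
  have key : ∀ w, retr (iotaTheta w) = w := by
    intro w
    have : (retr.comp iotaTheta) = MonoidHom.id _ := by
      apply FreeGroup.ext_hom
      intro x
      fin_cases x <;>
        simp [iotaTheta, theta1, theta2, π, retr, rfun,
          show (PresentedGroup.mk rels (FreeGroup.of 0) : G) = PresentedGroup.of 0 from rfl,
          show (PresentedGroup.mk rels (FreeGroup.of 1) : G) = PresentedGroup.of 1 from rfl,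
          PresentedGroup.toGroup.of]
    exact DFunLike.congr_fun this w
  intro x y h
  have := key x
  rw [h, key y] at this
  exact this.symm
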